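/- For any α, β > 0, ρ > 0, the quantity α·Φ̄(ρ/2 + (1/ρ)log(α/β)) + β·Φ(−ρ/2 + (1/ρ)log(α/β)) is bounded above by 2√(αβ)·exp(−ρ²/8). In particular, with ρ = ‖θ₀−θ₁‖/2 this gives a testing error bound of 2√(αβ)·exp(−‖θ₀−θ₁‖²/32). -/

import Mathlib

/-!
Identify `stdNormalCDF` with the law `gaussianReal 0 1`; the Chernoff bound with the Gaussian
moment generating function `exp (s ^ 2 / 2)` then bounds both tails by `exp (-t ^ 2 / 2)`.
Writing `α = √(αβ) exp (ρ t / 2)` and `β = √(αβ) exp (-ρ t / 2)` with `t = log (α / β) / ρ`,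
each of the two error terms is `√(αβ)` times `exp (± ρ t / 2)` times a Gaussian tail at
`ρ / 2 ± t`, and completing the square bounds this product by `exp (-ρ ^ 2 / 8)`; when the
tail point is negative the trivial bound `1` suffices.
-/

open Real

/-- The standard normal distribution function. -/
noncomputable def stdNormalCDF (t : ℝ) : ℝ :=
  (2 * Real.pi) ^ (-(1 : ℝ) / 2) * ∫ x in Set.Iic t, Real.exp (-x ^ 2 / 2)

open MeasureTheory ProbabilityTheory Set

lemma stdNormalCDF_eq_measureReal_Iic (t : ℝ) :
    stdNormalCDF t = (gaussianReal 0 1).real (Iic t) := by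
  rw [measureReal_def, gaussianReal_apply_eq_integral _ one_ne_zero,
    ENNReal.toReal_ofReal (setIntegral_nonneg measurableSet_Iic
      fun x _ ↦ gaussianPDFReal_nonneg _ _ x)]
  simp only [stdNormalCDF, gaussianPDFReal, NNReal.coe_one, mul_one, sub_zero, integral_const_mul,
    sqrt_eq_rpow, ← rpow_neg_one, ← rpow_mul (by positivity : (0:ℝ) ≤ 2 * π)]
  norm_num

lemma one_sub_stdNormalCDF_eq_measureReal_Ioi (t : ℝ) :
    1 - stdNormalCDF t = (gaussianReal 0 1).real (Ioi t) := by
  rw [stdNormalCDF_eq_measureReal_Iic, ← compl_Iic, probReal_compl_eq_one_sub measurableSet_Iic]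

lemma stdNormalCDF_nonneg (t : ℝ) : 0 ≤ stdNormalCDF t := by
  rw [stdNormalCDF_eq_measureReal_Iic]; exact measureReal_nonneg

lemma stdNormalCDF_le_one (t : ℝ) : stdNormalCDF t ≤ 1 := by
  rw [stdNormalCDF_eq_measureReal_Iic]; exact measureReal_le_one

lemma one_sub_stdNormalCDF_le_exp {t : ℝ} (ht : 0 ≤ t) :
    1 - stdNormalCDF t ≤ exp (-t ^ 2 / 2) := by
  rw [one_sub_stdNormalCDF_eq_measureReal_Ioi]
  calc (gaussianReal 0 1).real (Ioi t) ≤ (gaussianReal 0 1).real {x | t ≤ id x} :=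
        measureReal_mono Ioi_subset_Ici_self
    _ ≤ exp (-t * t) * mgf id (gaussianReal 0 1) t :=
        measure_ge_le_exp_mul_mgf t ht (integrable_exp_mul_gaussianReal t)
    _ = exp (-t ^ 2 / 2) := by
        rw [mgf_id_gaussianReal, ← exp_add]; congr 1; push_cast; ring

lemma stdNormalCDF_le_exp {t : ℝ} (ht : t ≤ 0) :
    stdNormalCDF t ≤ exp (-t ^ 2 / 2) := by
  rw [stdNormalCDF_eq_measureReal_Iic]
  calc (gaussianReal 0 1).real (Iic t) = (gaussianReal 0 1).real {x | id x ≤ t} := rfl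
    _ ≤ exp (-t * t) * mgf id (gaussianReal 0 1) t :=
        measure_le_le_exp_mul_mgf t ht (integrable_exp_mul_gaussianReal t)
    _ = exp (-t ^ 2 / 2) := by
        rw [mgf_id_gaussianReal, ← exp_add]; congr 1; push_cast; ring

/-- Completing the square: `ρ u / 2 - (ρ / 2 + u) ^ 2 / 2 = -ρ ^ 2 / 8 - u ^ 2 / 2`. -/
lemma exp_mul_le_exp_neg_sq_div_eight {ρ u p : ℝ} (hρ : 0 < ρ) (hp : p ≤ 1)
    (htail : 0 ≤ ρ / 2 + u → p ≤ exp (-(ρ / 2 + u) ^ 2 / 2)) :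
    exp (ρ * u / 2) * p ≤ exp (-ρ ^ 2 / 8) := by
  rcases le_or_gt 0 (ρ / 2 + u) with h | h
  · calc exp (ρ * u / 2) * p ≤ exp (ρ * u / 2) * exp (-(ρ / 2 + u) ^ 2 / 2) := by
          gcongr; exact htail h
      _ = exp (-ρ ^ 2 / 8 - u ^ 2 / 2) := by rw [← exp_add]; ring_nf
      _ ≤ exp (-ρ ^ 2 / 8) := exp_le_exp.mpr (by linarith [sq_nonneg u])
  · calc exp (ρ * u / 2) * p ≤ exp (ρ * u / 2) := mul_le_of_le_one_right (exp_pos _).le hp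
      _ ≤ exp (-ρ ^ 2 / 8) := exp_le_exp.mpr (by nlinarith [mul_neg_of_pos_of_neg hρ h])

lemma sqrt_mul_mul_exp_log_div_div_two {α β : ℝ} (hα : 0 < α) (hβ : 0 < β) :
    √(α * β) * exp (log (α / β) / 2) = α := by
  rw [exp_half, exp_log (div_pos hα hβ), ← sqrt_mul (mul_pos hα hβ).le,
    show α * β * (α / β) = α ^ 2 by field_simp, sqrt_sq hα.le]

theorem testing_error_bound (α β ρ : ℝ) (hα : 0 < α) (hβ : 0 < β) (hρ : 0 < ρ) :
    α * (1 - stdNormalCDF (ρ / 2 + (1 / ρ) * Real.log (α / β)))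
      + β * stdNormalCDF (-ρ / 2 + (1 / ρ) * Real.log (α / β)) ≤
    2 * Real.sqrt (α * β) * Real.exp (-ρ ^ 2 / 8) := by
  set t := (1 / ρ) * log (α / β)
  have hρt : ρ * t = log (α / β) := by rw [← mul_assoc, mul_one_div_cancel hρ.ne', one_mul]
  have hα_eq : α = √(α * β) * exp (ρ * t / 2) := by
    rw [hρt, sqrt_mul_mul_exp_log_div_div_two hα hβ]
  have hβ_eq : β = √(α * β) * exp (ρ * -t / 2) := by
    rw [mul_neg, hρt, ← log_inv, inv_div, mul_comm α, sqrt_mul_mul_exp_log_div_div_two hβ hα]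
  have hupper : exp (ρ * t / 2) * (1 - stdNormalCDF (ρ / 2 + t)) ≤ exp (-ρ ^ 2 / 8) :=
    exp_mul_le_exp_neg_sq_div_eight hρ (sub_le_self _ (stdNormalCDF_nonneg _))
      one_sub_stdNormalCDF_le_exp
  have hlower : exp (ρ * -t / 2) * stdNormalCDF (-ρ / 2 + t) ≤ exp (-ρ ^ 2 / 8) :=
    exp_mul_le_exp_neg_sq_div_eight hρ (stdNormalCDF_le_one _) fun h ↦ by
      convert stdNormalCDF_le_exp (t := -ρ / 2 + t) (by linarith) using 3; ring
  calc α * (1 - stdNormalCDF (ρ / 2 + t)) + β * stdNormalCDF (-ρ / 2 + t)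
      = √(α * β) * (exp (ρ * t / 2) * (1 - stdNormalCDF (ρ / 2 + t)))
        + √(α * β) * (exp (ρ * -t / 2) * stdNormalCDF (-ρ / 2 + t)) := by
        linear_combination (1 - stdNormalCDF (ρ / 2 + t)) * hα_eq
          + stdNormalCDF (-ρ / 2 + t) * hβ_eq
    _ ≤ √(α * β) * exp (-ρ ^ 2 / 8) + √(α * β) * exp (-ρ ^ 2 / 8) := by gcongr
    _ = 2 * √(α * β) * exp (-ρ ^ 2 / 8) := by ring
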